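/- Let (Ω, ℙ) be a probability space, V ≥ 1, c : Fin V → ℝ, and p : Fin V → ℝ≥0 with ∑_j p_j = 1. Let X₀ : Ω → ℝ be a random variable with ℙ(X₀ = c j) = p j for each j (and taking no other values), let ε : Ω → ℝ have law gaussianReal 0 1, and assume X₀ and ε are independent. Fix t ∈ (0,1] and set X_t = (1−t)·X₀ + t·ε. Then ℙ-almost surely, E[X₀ ∣ σ(X_t)] = [∑_j p_j · (c j) · exp(−(X_t − (1−t)·c j)² / (2t²))] / [∑_j p_j · exp(−(X_t − (1−t)·c j)² / (2t²))]. -/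

import Mathlib

/-!
Independence makes the law of `(X₀, ε)` the product `(∑ⱼ pⱼ δ_{cⱼ}) ⊗ N(0,1)`, so the pair
`(X₀, X_t)` has law `∑ⱼ pⱼ δ_{cⱼ} ⊗ N((1-t)cⱼ, t²)`. Hence for every Borel set `A`, both
`E[X₀; X_t ∈ A]` and `E[f(X_t); X_t ∈ A]` are integrals over `A` against the Gaussian densities
`φⱼ` weighted by `pⱼ`, and they agree because `f`, the ratio in the statement, satisfies
`∑ⱼ pⱼ φⱼ f = ∑ⱼ pⱼ φⱼ cⱼ` pointwise. This is the defining property of `E[X₀ ∣ σ(X_t)]`.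
-/

open MeasureTheory ProbabilityTheory Real
open scoped NNReal ENNReal

noncomputable def posteriorMean {ι : Type*} [Fintype ι] (c : ι → ℝ) (p : ι → ℝ≥0) (t x : ℝ) : ℝ :=
  (∑ j, (p j : ℝ) * c j * exp (-(x - (1 - t) * c j) ^ 2 / (2 * t ^ 2))) /
    ∑ j, (p j : ℝ) * exp (-(x - (1 - t) * c j) ^ 2 / (2 * t ^ 2))

section posteriorMean

variable {ι : Type*} [Fintype ι] (c : ι → ℝ) (p : ι → ℝ≥0) (t : ℝ)

lemma measurable_posteriorMean : Measurable (posteriorMean c p t) := by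
  unfold posteriorMean; fun_prop

variable {p}

lemma sum_mul_exp_pos (hp : ∑ j, p j ≠ 0) (x : ℝ) :
    0 < ∑ j, (p j : ℝ) * exp (-(x - (1 - t) * c j) ^ 2 / (2 * t ^ 2)) := by
  obtain ⟨j, -, hj⟩ := Finset.exists_ne_zero_of_sum_ne_zero hp
  exact Finset.sum_pos' (fun j _ => by positivity)
    ⟨j, Finset.mem_univ _, mul_pos (by positivity) (exp_pos _)⟩

lemma abs_posteriorMean_le (hp : ∑ j, p j ≠ 0) (x : ℝ) :
    |posteriorMean c p t x| ≤ ∑ j, |c j| := by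
  set w : ι → ℝ := fun j => (p j : ℝ) * exp (-(x - (1 - t) * c j) ^ 2 / (2 * t ^ 2))
  have hw : ∀ j, 0 ≤ w j := fun j => by positivity
  have hD : 0 < ∑ j, w j := sum_mul_exp_pos c t hp x
  rw [posteriorMean, abs_div, abs_of_pos hD, div_le_iff₀ hD, Finset.sum_mul]
  calc |∑ j, (p j : ℝ) * c j * exp (-(x - (1 - t) * c j) ^ 2 / (2 * t ^ 2))|
      ≤ ∑ j, |c j| * w j := by
        refine (Finset.abs_sum_le_sum_abs _ _).trans_eq (Finset.sum_congr rfl fun j _ => ?_)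
        rw [mul_right_comm, abs_mul, abs_of_nonneg (hw j), mul_comm]
    _ ≤ ∑ j, |c j| * ∑ i, w i := by
        gcongr with j
        exact Finset.single_le_sum (fun i _ => hw i) (Finset.mem_univ j)

lemma integrable_posteriorMean (hp : ∑ j, p j ≠ 0) (μ : Measure ℝ) [IsFiniteMeasure μ] :
    Integrable (posteriorMean c p t) μ :=
  Integrable.of_bound (measurable_posteriorMean c p t).aestronglyMeasurable _
    (ae_of_all _ (abs_posteriorMean_le c t hp))

lemma sum_mul_gaussianPDFReal_mul_posteriorMean (hp : ∑ j, p j ≠ 0) (x : ℝ) :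
    ∑ j, (p j : ℝ) * gaussianPDFReal ((1 - t) * c j) (.mk (t ^ 2) (sq_nonneg t)) x
        * posteriorMean c p t x
      = ∑ j, (p j : ℝ) * gaussianPDFReal ((1 - t) * c j) (.mk (t ^ 2) (sq_nonneg t)) x * c j := by
  set e : ι → ℝ := fun j => exp (-(x - (1 - t) * c j) ^ 2 / (2 * t ^ 2))
  set K : ℝ := (√(2 * π * t ^ 2))⁻¹
  have hD : 0 < ∑ j, (p j : ℝ) * e j := sum_mul_exp_pos c t hp x
  have hpdf : ∀ j, gaussianPDFReal ((1 - t) * c j) (.mk (t ^ 2) (sq_nonneg t)) x = K * e j :=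
    fun j => rfl
  simp_rw [hpdf, ← Finset.sum_mul]
  have hden : ∑ j, (p j : ℝ) * (K * e j) = K * ∑ j, (p j : ℝ) * e j := by
    rw [Finset.mul_sum]; exact Finset.sum_congr rfl fun j _ => by ring
  have hnum : ∑ j, (p j : ℝ) * (K * e j) * c j = K * ∑ j, (p j : ℝ) * c j * e j := by
    rw [Finset.mul_sum]; exact Finset.sum_congr rfl fun j _ => by ring
  have hmean : posteriorMean c p t x
      = (∑ j, (p j : ℝ) * c j * e j) / ∑ j, (p j : ℝ) * e j := rfl
  rw [hden, hnum, hmean]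
  field_simp

lemma sum_integral_mul_indicator_posteriorMean (hp : ∑ j, p j ≠ 0) {A : Set ℝ}
    (hA : MeasurableSet A) :
    ∑ j, (p j : ℝ) * ∫ x, gaussianPDFReal ((1 - t) * c j) (.mk (t ^ 2) (sq_nonneg t)) x *
        A.indicator (posteriorMean c p t) x
      = ∑ j, (p j : ℝ) * ∫ x, gaussianPDFReal ((1 - t) * c j) (.mk (t ^ 2) (sq_nonneg t)) x *
        A.indicator (fun _ => c j) x := by
  have hbound : ∀ x, ‖A.indicator (posteriorMean c p t) x‖ ≤ ∑ j, |c j| := fun x =>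
    (norm_indicator_le_norm_self _ x).trans (abs_posteriorMean_le c t hp x)
  have hpdf : ∀ j, Integrable (gaussianPDFReal ((1 - t) * c j) (.mk (t ^ 2) (sq_nonneg t))) :=
    fun j => integrable_gaussianPDFReal _ _
  simp_rw [← integral_const_mul]
  rw [← integral_finsetSum _ fun j _ => ((hpdf j).mul_bdd
      ((measurable_posteriorMean c p t).indicator hA).aestronglyMeasurable
      (ae_of_all _ hbound)).const_mul _,
    ← integral_finsetSum _ fun j _ => ((hpdf j).mul_bdd
      (aestronglyMeasurable_const.indicator hA)
      (ae_of_all _ fun x => norm_indicator_le_norm_self _ x)).const_mul _]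
  refine integral_congr_ae (ae_of_all _ fun x => ?_)
  by_cases hx : x ∈ A
  · simpa [Set.indicator_of_mem hx, mul_assoc] using
      sum_mul_gaussianPDFReal_mul_posteriorMean c t hp x
  · simp [Set.indicator_of_notMem hx]

end posteriorMean

section discreteLaw

variable {α β ι : Type*} [MeasurableSpace α] [MeasurableSpace β] [Fintype ι]

lemma isProbabilityMeasure_sum_smul_dirac {c : ι → α} {p : ι → ℝ≥0} (hp : ∑ j, p j = 1) :
    IsProbabilityMeasure (∑ j, (p j : ℝ≥0∞) • Measure.dirac (c j)) := by
  constructor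
  simp [Measure.finsetSum_apply, ← ENNReal.ofNNReal_finsetSum, hp]

lemma map_eq_sum_smul_dirac [MeasurableSingletonClass α] {Ω : Type*} [MeasurableSpace Ω]
    {P : Measure Ω} [IsProbabilityMeasure P] {X : Ω → α} (hX : Measurable X)
    {c : ι → α} {p : ι → ℝ≥0} (hp : ∑ j, p j = 1)
    (hlaw : ∀ j, P {ω | X ω = c j} = p j) (hsupp : ∀ ω, ∃ j, X ω = c j) :
    P.map X = ∑ j, (p j : ℝ≥0∞) • Measure.dirac (c j) := by
  classical
  -- Both sides are probability measures, so the union bound `≤` suffices; this also covers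
  -- repeated values of `c`.
  have := isProbabilityMeasure_sum_smul_dirac (c := c) hp
  have := Measure.isProbabilityMeasure_map (μ := P) hX.aemeasurable
  refine Measure.eq_of_le_of_isProbabilityMeasure (Measure.le_intro fun A hA _ => ?_)
  have hcover : X ⁻¹' A ⊆ ⋃ j ∈ Finset.univ.filter (c · ∈ A), {ω | X ω = c j} := by
    intro ω hω
    obtain ⟨j, hj⟩ := hsupp ω
    exact Set.mem_biUnion (Finset.mem_filter.2 ⟨Finset.mem_univ j, hj ▸ hω⟩) hj
  calc P.map X A = P (X ⁻¹' A) := Measure.map_apply hX hA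
    _ ≤ ∑ j ∈ Finset.univ.filter (c · ∈ A), P {ω | X ω = c j} :=
        (measure_mono hcover).trans (measure_biUnion_finset_le _ _)
    _ = (∑ j, (p j : ℝ≥0∞) • Measure.dirac (c j)) A := by
        simp [Measure.finsetSum_apply, Measure.dirac_apply' _ hA, Set.indicator_apply,
          Finset.sum_filter, hlaw]

lemma sum_smul_dirac_prod (c : ι → α) (p : ι → ℝ≥0) (μ : Measure β) [SFinite μ] :
    (∑ j, (p j : ℝ≥0∞) • Measure.dirac (c j)).prod μ
      = ∑ j, (p j : ℝ≥0∞) • μ.map (Prod.mk (c j)) := by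
  ext s hs
  rw [Measure.prod_apply hs, lintegral_finsetSum_measure, Measure.finsetSum_apply]
  refine Finset.sum_congr rfl fun j _ => ?_
  rw [lintegral_smul_measure, lintegral_dirac' _ (measurable_measure_prodMk_left hs),
    Measure.smul_apply, Measure.map_apply measurable_prodMk_left hs]

lemma map_prodMk_eq_sum_of_indepFun {Ω : Type*} [MeasurableSpace Ω] {P : Measure Ω}
    [IsFiniteMeasure P] {X : Ω → α} {Y : Ω → β} (hX : Measurable X) (hY : Measurable Y)
    (hXY : IndepFun X Y P) {c : ι → α} {p : ι → ℝ≥0}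
    (hlaw : P.map X = ∑ j, (p j : ℝ≥0∞) • Measure.dirac (c j)) :
    P.map (fun ω => (X ω, Y ω)) = ∑ j, (p j : ℝ≥0∞) • (P.map Y).map (Prod.mk (c j)) := by
  rw [(indepFun_iff_map_prod_eq_prod_map_map hX.aemeasurable hY.aemeasurable).mp hXY, hlaw,
    sum_smul_dirac_prod]

lemma integral_sum_smul_map_prodMk {E : Type*} [NormedAddCommGroup E] [NormedSpace ℝ E]
    {c : ι → α} {p : ι → ℝ≥0} {μ : ι → Measure β} {H : α × β → E}
    (hH : StronglyMeasurable H) (hint : ∀ j, Integrable (fun b => H (c j, b)) (μ j)) :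
    ∫ q, H q ∂(∑ j, (p j : ℝ≥0∞) • (μ j).map (Prod.mk (c j)))
      = ∑ j, (p j : ℝ) • ∫ b, H (c j, b) ∂(μ j) := by
  have hint' : ∀ j, Integrable H ((μ j).map (Prod.mk (c j))) := fun j =>
    (integrable_map_measure hH.aestronglyMeasurable measurable_prodMk_left.aemeasurable).2 (hint j)
  rw [integral_finsetSum_measure fun j _ => (hint' j).smul_measure ENNReal.coe_ne_top]
  refine Finset.sum_congr rfl fun j _ => ?_
  rw [integral_smul_measure, integral_map measurable_prodMk_left.aemeasurable
    hH.aestronglyMeasurable, ENNReal.coe_toReal]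

end discreteLaw

lemma gaussianReal_map_const_add_const_mul (y t : ℝ) :
    (gaussianReal 0 1).map (fun b => y + t * b) = gaussianReal y (.mk (t ^ 2) (sq_nonneg t)) := by
  have h : (fun b => y + t * b) = (y + ·) ∘ (t * ·) := rfl
  rw [h, ← Measure.map_map (measurable_const_add y) (measurable_const_mul t),
    gaussianReal_map_const_mul, gaussianReal_map_const_add]
  simp only [mul_zero, zero_add, mul_one]

section noisyPair

variable {Ω ι : Type*} [MeasurableSpace Ω] {P : Measure Ω} [IsFiniteMeasure P] [Fintype ι]
  {c : ι → ℝ} {p : ι → ℝ≥0} {X₀ ε : Ω → ℝ}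

lemma map_prodMk_noisy_eq_sum (hX₀ : Measurable X₀) (hε : Measurable ε)
    (hlaw : P.map X₀ = ∑ j, (p j : ℝ≥0∞) • Measure.dirac (c j))
    (hεlaw : P.map ε = gaussianReal 0 1) (hindep : IndepFun X₀ ε P) (t : ℝ) :
    P.map (fun ω => (X₀ ω, (1 - t) * X₀ ω + t * ε ω))
      = ∑ j, (p j : ℝ≥0∞) •
          (gaussianReal ((1 - t) * c j) (.mk (t ^ 2) (sq_nonneg t))).map (Prod.mk (c j)) := by
  let Φ : ℝ × ℝ → ℝ × ℝ := fun q => (q.1, (1 - t) * q.1 + t * q.2)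
  have hΦ : Measurable Φ := by fun_prop
  have hfiber : ∀ j, (gaussianReal 0 1).map (Φ ∘ Prod.mk (c j))
      = (gaussianReal ((1 - t) * c j) (.mk (t ^ 2) (sq_nonneg t))).map (Prod.mk (c j)) := by
    intro j
    rw [← gaussianReal_map_const_add_const_mul,
      Measure.map_map measurable_prodMk_left (by fun_prop)]
    rfl
  calc P.map (fun ω => (X₀ ω, (1 - t) * X₀ ω + t * ε ω))
      = (P.map (fun ω => (X₀ ω, ε ω))).map Φ := (Measure.map_map hΦ (hX₀.prodMk hε)).symm
    _ = _ := by
      rw [map_prodMk_eq_sum_of_indepFun hX₀ hε hindep hlaw, hεlaw,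
        Measure.map_finset_sum' hΦ.aemeasurable]
      refine Finset.sum_congr rfl fun j _ => ?_
      rw [Measure.map_smul, Measure.map_map hΦ measurable_prodMk_left, hfiber]

lemma integral_noisy_pair (hX₀ : Measurable X₀) (hε : Measurable ε)
    (hlaw : P.map X₀ = ∑ j, (p j : ℝ≥0∞) • Measure.dirac (c j))
    (hεlaw : P.map ε = gaussianReal 0 1) (hindep : IndepFun X₀ ε P) {t : ℝ} (ht : t ≠ 0)
    {H : ℝ × ℝ → ℝ} (hH : Measurable H)
    (hint : ∀ j, Integrable (fun x => H (c j, x))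
      (gaussianReal ((1 - t) * c j) (.mk (t ^ 2) (sq_nonneg t)))) :
    ∫ ω, H (X₀ ω, (1 - t) * X₀ ω + t * ε ω) ∂P
      = ∑ j, (p j : ℝ) *
          ∫ x, gaussianPDFReal ((1 - t) * c j) (.mk (t ^ 2) (sq_nonneg t)) x * H (c j, x) := by
  have hvar : NNReal.mk (t ^ 2) (sq_nonneg t) ≠ 0 := by
    rw [← NNReal.coe_ne_zero]; exact pow_ne_zero 2 ht
  rw [← integral_map (by fun_prop) hH.aestronglyMeasurable,
    map_prodMk_noisy_eq_sum hX₀ hε hlaw hεlaw hindep t,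
    integral_sum_smul_map_prodMk hH.stronglyMeasurable hint]
  simp_rw [integral_gaussianReal_eq_integral_smul hvar, smul_eq_mul]

lemma setIntegral_preimage_posteriorMean (hX₀ : Measurable X₀) (hε : Measurable ε)
    (hlaw : P.map X₀ = ∑ j, (p j : ℝ≥0∞) • Measure.dirac (c j))
    (hεlaw : P.map ε = gaussianReal 0 1) (hindep : IndepFun X₀ ε P) (hp : ∑ j, p j ≠ 0)
    {t : ℝ} (ht : t ≠ 0) {A : Set ℝ} (hA : MeasurableSet A) :
    ∫ ω in (fun ω => (1 - t) * X₀ ω + t * ε ω) ⁻¹' A,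
        posteriorMean c p t ((1 - t) * X₀ ω + t * ε ω) ∂P
      = ∫ ω in (fun ω => (1 - t) * X₀ ω + t * ε ω) ⁻¹' A, X₀ ω ∂P := by
  have hXt : Measurable fun ω => (1 - t) * X₀ ω + t * ε ω := by fun_prop
  calc ∫ ω in _ ⁻¹' A, posteriorMean c p t ((1 - t) * X₀ ω + t * ε ω) ∂P
      = ∫ ω, A.indicator (posteriorMean c p t) ((1 - t) * X₀ ω + t * ε ω) ∂P := by
        rw [← integral_indicator (hXt hA)]; rfl
    _ = ∑ j, (p j : ℝ) * ∫ x, gaussianPDFReal ((1 - t) * c j) (.mk (t ^ 2) (sq_nonneg t)) x *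
          A.indicator (posteriorMean c p t) x :=
        integral_noisy_pair (H := fun q => A.indicator (posteriorMean c p t) q.2) hX₀ hε hlaw
          hεlaw hindep ht (((measurable_posteriorMean c p t).indicator hA).comp measurable_snd)
          fun j => (integrable_posteriorMean c t hp _).indicator hA
    _ = ∑ j, (p j : ℝ) * ∫ x, gaussianPDFReal ((1 - t) * c j) (.mk (t ^ 2) (sq_nonneg t)) x *
          A.indicator (fun _ => c j) x :=
        sum_integral_mul_indicator_posteriorMean c t hp hA
    _ = ∫ ω, (Prod.snd ⁻¹' A).indicator Prod.fst (X₀ ω, (1 - t) * X₀ ω + t * ε ω) ∂P :=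
        (integral_noisy_pair hX₀ hε hlaw hεlaw hindep ht
          (measurable_fst.indicator (measurable_snd hA))
          fun j => (integrable_const (c j)).indicator hA).symm
    _ = ∫ ω in _ ⁻¹' A, X₀ ω ∂P := by
        rw [← integral_indicator (hXt hA)]; rfl

end noisyPair

theorem stmt_8_general {Ω : Type*} [MeasurableSpace Ω] (P : Measure Ω) [IsProbabilityMeasure P]
    {V : ℕ} (c : Fin V → ℝ) (p : Fin V → ℝ≥0) (hp : ∑ j, p j = 1)
    (X₀ ε : Ω → ℝ) (hX₀ : Measurable X₀) (hε : Measurable ε)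
    (hlaw₀ : ∀ j, P {ω | X₀ ω = c j} = (p j : ℝ≥0∞))
    (hsupp : ∀ ω, ∃ j, X₀ ω = c j)
    (hεlaw : Measure.map ε P = gaussianReal 0 1)
    (hindep : IndepFun X₀ ε P)
    (t : ℝ) (ht : t ∈ Set.Ioc (0 : ℝ) 1) :
    P[X₀ | MeasurableSpace.comap (fun ω => (1 - t) * X₀ ω + t * ε ω) inferInstance]
      =ᵐ[P]
    fun ω =>
      (∑ j, (p j : ℝ) * c j *
          Real.exp (-(((1 - t) * X₀ ω + t * ε ω) - (1 - t) * c j) ^ 2 / (2 * t ^ 2))) /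
        (∑ j, (p j : ℝ) *
          Real.exp (-(((1 - t) * X₀ ω + t * ε ω) - (1 - t) * c j) ^ 2 / (2 * t ^ 2))) := by
  have hp0 : ∑ j, p j ≠ 0 := by simp [hp]
  have hXt : Measurable fun ω => (1 - t) * X₀ ω + t * ε ω := by fun_prop
  have hX₀int : Integrable X₀ P := Integrable.of_bound hX₀.aestronglyMeasurable (∑ j, |c j|)
    (ae_of_all _ fun ω => by
      obtain ⟨j, hj⟩ := hsupp ω
      exact hj ▸ Finset.single_le_sum (fun i _ => abs_nonneg (c i)) (Finset.mem_univ j))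
  refine (ae_eq_condExp_of_forall_setIntegral_eq hXt.comap_le hX₀int
    (fun _ _ _ => ((integrable_posteriorMean c t hp0 _).comp_measurable hXt).integrableOn) ?_
    ((measurable_posteriorMean c p t).comp
      (Measurable.of_comap_le le_rfl)).aestronglyMeasurable).symm
  rintro _ ⟨A, hA, rfl⟩ -
  exact setIntegral_preimage_posteriorMean hX₀ hε (map_eq_sum_smul_dirac hX₀ hp hlaw₀ hsupp)
    hεlaw hindep hp0 ht.1.ne' hA

/-- Posterior mean under Gaussian noise (Appendix A of the paper): if `X₀` is distributed
as `∑ j, p j δ_{c j}`, `ε ∼ N(0,1)` is independent of `X₀`, and `X_t = (1-t)X₀ + tε`,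
then a.s. `E[X₀ ∣ σ(X_t)]` equals the likelihood-weighted average of the codebook values. -/
theorem stmt_8 {Ω : Type*} [MeasurableSpace Ω] (P : Measure Ω) [IsProbabilityMeasure P]
    {V : ℕ} (hV : 1 ≤ V) (c : Fin V → ℝ) (p : Fin V → ℝ≥0) (hp : ∑ j, p j = 1)
    (X₀ ε : Ω → ℝ) (hX₀ : Measurable X₀) (hε : Measurable ε)
    (hlaw₀ : ∀ j, P {ω | X₀ ω = c j} = (p j : ℝ≥0∞))
    (hsupp : ∀ ω, ∃ j, X₀ ω = c j)
    (hεlaw : Measure.map ε P = gaussianReal 0 1)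
    (hindep : IndepFun X₀ ε P)
    (t : ℝ) (ht : t ∈ Set.Ioc (0 : ℝ) 1) :
    P[X₀ | MeasurableSpace.comap (fun ω => (1 - t) * X₀ ω + t * ε ω) inferInstance]
      =ᵐ[P]
    fun ω =>
      (∑ j, (p j : ℝ) * c j *
          Real.exp (-(((1 - t) * X₀ ω + t * ε ω) - (1 - t) * c j) ^ 2 / (2 * t ^ 2))) /
        (∑ j, (p j : ℝ) *
          Real.exp (-(((1 - t) * X₀ ω + t * ε ω) - (1 - t) * c j) ^ 2 / (2 * t ^ 2))) :=
  stmt_8_general P c p hp X₀ ε hX₀ hε hlaw₀ hsupp hεlaw hindep t ht
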